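/- arXiv:2002.10505 — 2 statements merged into one kernel-verified Lean document; each statement's English description precedes it below -/
import Mathlib

section
/- Along any fixed noise sample path, the closed-loop cost satisfies J(ε) = J̄ + δJ1(ε) + δJ2(ε) + O(ε³) as ε → 0; that is, the function ε ↦ J(ε) − J̄ − δJ1(ε) − δJ2(ε) is O(ε³) in the neighborhood filter of 0. (Lemma 2: the sample-path cost decomposes into the nominal cost, a first-order term determined solely by the linear closed-loop system, and a second-order term determined by the linear states and the quadratic correction e^{(2)}, up to O(ε³).) -/
/-!
Write `δx = δxˡ + d` along the sample path. Since each `S̄_t` is flat to first order at `0`,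
every state is `O(ε)`, the nonlinear corrections `S̄_t(δx_t)` are `O(ε²)`, and hence so is `d`:
it is driven through the linear closed loop by those corrections alone. Expanding
`S̄_t(δx_t) = ½ S̄_t″(0) δx_t² + O(ε³)` and replacing `δx_t²` by `(δxˡ_t)²` (which costs
`(δx_t − δxˡ_t)(δx_t + δxˡ_t) = O(ε³)`) shows that `d − e⁽²⁾` is driven by an `O(ε³)` input,
so `δx = δxˡ + e⁽²⁾ + O(ε³)`. The same two expansions, applied to the stage costs `H̄_t`,
give the decomposition of `J` term by term.
-/

open Asymptotics Filter Topology

theorem taylor_two_isBigO_cube {f : ℝ → ℝ} (hf : ContDiff ℝ 3 f) :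
    (fun x => f x - (f 0 + deriv f 0 * x + 1 / 2 * iteratedDeriv 2 f 0 * x ^ 2))
      =O[𝓝 0] fun x => x ^ 3 := by
  have hlittle := (taylor_isLittleO_univ (x₀ := 0) hf).isBigO
  simp only [sub_zero] at hlittle
  have hcubic : (fun x : ℝ => iteratedDeriv 3 f 0 / 6 * x ^ 3) =O[𝓝 0] fun x => x ^ 3 :=
    (isBigO_refl _ _).const_mul_left _
  refine (hlittle.add hcubic).congr_left fun x => ?_
  simp only [taylorWithinEval_succ, taylor_within_apply, zero_add, Finset.range_one, sub_zero,
    iteratedDerivWithin_univ, smul_eq_mul, Finset.sum_singleton, Nat.factorial, Nat.cast_one,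
    inv_one, pow_zero, mul_one, iteratedDeriv_zero, one_mul, CharP.cast_eq_zero, pow_one,
    iteratedDeriv_one, Nat.succ_eq_add_one, Nat.reduceAdd, Nat.cast_ofNat, mul_inv_rev, one_div]
  ring

section

variable {α : Type*} {l : Filter α} {φ : ℝ → ℝ} {u v g : α → ℝ}

theorem isBigO_comp_sub_half_mul_sq (hφ : ContDiff ℝ 3 φ) (hφ0 : φ 0 = 0)
    (hφ1 : deriv φ 0 = 0) (hu : u =O[l] g) (hu0 : Tendsto u l (𝓝 0)) :
    (fun a => φ (u a) - 1 / 2 * iteratedDeriv 2 φ 0 * u a ^ 2) =O[l] fun a => g a ^ 3 := by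
  have htaylor := (taylor_two_isBigO_cube hφ).comp_tendsto hu0 |>.trans (hu.pow 3)
  simpa only [hφ0, hφ1, zero_mul, add_zero, zero_add, Function.comp_def] using htaylor

theorem isBigO_comp_sq (hφ : ContDiff ℝ 3 φ) (hφ0 : φ 0 = 0) (hφ1 : deriv φ 0 = 0)
    (hu : u =O[l] g) (hu0 : Tendsto u l (𝓝 0)) :
    (fun a => φ (u a)) =O[l] fun a => g a ^ 2 := by
  have hcube : (fun a => u a ^ 3) =O[l] fun a => u a ^ 2 :=
    ((hu0.isBigO_one ℝ).mul (isBigO_refl (fun a => u a ^ 2) l)).congr (fun a => by ring)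
      fun a => one_mul _
  have hquad : (fun a => 1 / 2 * iteratedDeriv 2 φ 0 * u a ^ 2) =O[l] fun a => u a ^ 2 :=
    (isBigO_refl _ _).const_mul_left _
  have hsq := ((isBigO_comp_sub_half_mul_sq hφ hφ0 hφ1 (isBigO_refl u l) hu0).trans hcube).add
    hquad
  exact (hsq.congr_left fun a => by ring).trans (hu.pow 2)

theorem isBigO_comp_sub_half_mul_sq_of_sub (hφ : ContDiff ℝ 3 φ) (hφ0 : φ 0 = 0)
    (hφ1 : deriv φ 0 = 0) (hu : u =O[l] g) (hv : v =O[l] g)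
    (huv : (fun a => u a - v a) =O[l] fun a => g a ^ 2) (hu0 : Tendsto u l (𝓝 0)) :
    (fun a => φ (u a) - 1 / 2 * iteratedDeriv 2 φ 0 * v a ^ 2) =O[l] fun a => g a ^ 3 := by
  have hsq : (fun a => 1 / 2 * iteratedDeriv 2 φ 0 * (u a ^ 2 - v a ^ 2)) =O[l]
      fun a => g a ^ 3 :=
    ((huv.mul (hu.add hv)).const_mul_left (1 / 2 * iteratedDeriv 2 φ 0)).congr
      (fun a => by ring) fun a => by ring
  exact ((isBigO_comp_sub_half_mul_sq hφ hφ0 hφ1 hu hu0).add hsq).congr_left fun a => by ring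

theorem isBigO_of_linear_recursion {T : ℕ} {A : ℕ → ℝ} {x r : α → ℕ → ℝ}
    (h0 : (fun a => x a 0) =O[l] g)
    (hrec : ∀ a, ∀ t < T, x a (t + 1) = A t * x a t + r a t)
    (hr : ∀ t < T, (fun a => x a t) =O[l] g → (fun a => r a t) =O[l] g) :
    ∀ t ≤ T, (fun a => x a t) =O[l] g := by
  intro t ht
  induction t with
  | zero => exact h0
  | succ t ih =>
    have hxt := ih (Nat.le_of_succ_le ht)
    exact ((hxt.const_mul_left (A t)).add (hr t ht hxt)).congr_left fun a => (hrec a t ht).symm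

end

section ClosedLoop

variable {T : ℕ} {A : ℕ → ℝ} {S : ℕ → ℝ → ℝ} {w : ℕ → ℝ} {δx δxl e2 : ℝ → ℕ → ℝ}

theorem linear_state_isBigO (hl0 : ∀ ε, δxl ε 0 = 0)
    (hl : ∀ ε, ∀ t < T, δxl ε (t + 1) = A t * δxl ε t + ε * w t) :
    ∀ t ≤ T, (fun ε => δxl ε t) =O[𝓝 0] fun ε => ε :=
  isBigO_of_linear_recursion (r := fun ε t => ε * w t)
    ((isBigO_zero _ _).congr_left fun ε => (hl0 ε).symm) hl
    fun t _ _ => ((isBigO_refl _ _).const_mul_left (w t)).congr_left fun _ => mul_comm _ _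

theorem state_isBigO (hS : ∀ t < T, ContDiff ℝ 3 (S t)) (hS0 : ∀ t < T, S t 0 = 0)
    (hS1 : ∀ t < T, deriv (S t) 0 = 0) (hx0 : ∀ ε, δx ε 0 = 0)
    (hx : ∀ ε, ∀ t < T, δx ε (t + 1) = A t * δx ε t + S t (δx ε t) + ε * w t) :
    ∀ t ≤ T, (fun ε => δx ε t) =O[𝓝 0] fun ε => ε := by
  refine isBigO_of_linear_recursion (r := fun ε t => S t (δx ε t) + ε * w t)
    ((isBigO_zero _ _).congr_left fun ε => (hx0 ε).symm)
    (fun ε t ht => (hx ε t ht).trans (add_assoc _ _ _)) fun t ht hxt => ?_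
  have hsq : (fun ε : ℝ => ε ^ 2) =O[𝓝 0] fun ε => ε := (isLittleO_pow_id one_lt_two).isBigO
  have hnoise : (fun ε => ε * w t) =O[𝓝 0] fun ε => ε :=
    ((isBigO_refl _ _).const_mul_left (w t)).congr_left fun _ => mul_comm _ _
  exact ((isBigO_comp_sq (hS t ht) (hS0 t ht) (hS1 t ht) hxt
    (hxt.trans_tendsto tendsto_id)).trans hsq).add hnoise

theorem state_sub_linear_isBigO_sq (hS : ∀ t < T, ContDiff ℝ 3 (S t))
    (hS0 : ∀ t < T, S t 0 = 0) (hS1 : ∀ t < T, deriv (S t) 0 = 0) (hx0 : ∀ ε, δx ε 0 = 0)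
    (hx : ∀ ε, ∀ t < T, δx ε (t + 1) = A t * δx ε t + S t (δx ε t) + ε * w t)
    (hl0 : ∀ ε, δxl ε 0 = 0) (hl : ∀ ε, ∀ t < T, δxl ε (t + 1) = A t * δxl ε t + ε * w t) :
    ∀ t ≤ T, (fun ε => δx ε t - δxl ε t) =O[𝓝 0] fun ε => ε ^ 2 := by
  have hxO := state_isBigO hS hS0 hS1 hx0 hx
  refine isBigO_of_linear_recursion (r := fun ε t => S t (δx ε t))
    ((isBigO_zero _ _).congr_left fun ε => by rw [hx0, hl0, sub_self])
    (fun ε t ht => by rw [hx ε t ht, hl ε t ht]; ring) fun t ht _ => ?_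
  exact isBigO_comp_sq (hS t ht) (hS0 t ht) (hS1 t ht) (hxO t ht.le)
    ((hxO t ht.le).trans_tendsto tendsto_id)

theorem state_sub_linear_sub_secondOrder_isBigO_cube (hS : ∀ t < T, ContDiff ℝ 3 (S t))
    (hS0 : ∀ t < T, S t 0 = 0) (hS1 : ∀ t < T, deriv (S t) 0 = 0) (hx0 : ∀ ε, δx ε 0 = 0)
    (hx : ∀ ε, ∀ t < T, δx ε (t + 1) = A t * δx ε t + S t (δx ε t) + ε * w t)
    (hl0 : ∀ ε, δxl ε 0 = 0) (hl : ∀ ε, ∀ t < T, δxl ε (t + 1) = A t * δxl ε t + ε * w t)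
    (he0 : ∀ ε, e2 ε 0 = 0)
    (he : ∀ ε, ∀ t < T, e2 ε (t + 1) =
      A t * e2 ε t + (1 / 2) * iteratedDeriv 2 (S t) 0 * (δxl ε t) ^ 2) :
    ∀ t ≤ T, (fun ε => δx ε t - δxl ε t - e2 ε t) =O[𝓝 0] fun ε => ε ^ 3 := by
  have hxO := state_isBigO hS hS0 hS1 hx0 hx
  have hlO := linear_state_isBigO hl0 hl
  have hdO := state_sub_linear_isBigO_sq hS hS0 hS1 hx0 hx hl0 hl
  refine isBigO_of_linear_recursion
    (r := fun ε t => S t (δx ε t) - 1 / 2 * iteratedDeriv 2 (S t) 0 * δxl ε t ^ 2)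
    ((isBigO_zero _ _).congr_left fun ε => by rw [hx0, hl0, he0, sub_self, sub_self])
    (fun ε t ht => by rw [hx ε t ht, hl ε t ht, he ε t ht]; ring) fun t ht _ => ?_
  exact isBigO_comp_sub_half_mul_sq_of_sub (hS t ht) (hS0 t ht) (hS1 t ht) (hxO t ht.le)
    (hlO t ht.le) (hdO t ht.le) ((hxO t ht.le).trans_tendsto tendsto_id)

end ClosedLoop

/-- Lemma 2: along any fixed noise sample path, the closed-loop cost decomposes as
`J(ε) = J̄ + δJ1(ε) + δJ2(ε) + O(ε³)` as `ε → 0`, where `J̄` is the nominal cost, `δJ1` is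
the first-order cost perturbation of the linear closed loop, and `δJ2` is the second-order
cost perturbation built from the linear states and the quadratic correction `e²`. -/
theorem sample_path_cost_decomposition_isBigO_cube
    (T : ℕ) (A : ℕ → ℝ) (S : ℕ → ℝ → ℝ)
    (hS : ∀ t < T, ContDiff ℝ 3 (S t))
    (hS0 : ∀ t < T, S t 0 = 0)
    (hS1 : ∀ t < T, deriv (S t) 0 = 0)
    (w : ℕ → ℝ)
    (δx δxl e2 : ℝ → ℕ → ℝ)
    (hx0 : ∀ ε, δx ε 0 = 0)
    (hx : ∀ ε, ∀ t < T, δx ε (t + 1) = A t * δx ε t + S t (δx ε t) + ε * w t)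
    (hl0 : ∀ ε, δxl ε 0 = 0)
    (hl : ∀ ε, ∀ t < T, δxl ε (t + 1) = A t * δxl ε t + ε * w t)
    (he0 : ∀ ε, e2 ε 0 = 0)
    (he : ∀ ε, ∀ t < T, e2 ε (t + 1) =
      A t * e2 ε t + (1 / 2) * iteratedDeriv 2 (S t) 0 * (δxl ε t) ^ 2)
    (c C : ℕ → ℝ) (H : ℕ → ℝ → ℝ)
    (hH : ∀ t ≤ T, ContDiff ℝ 3 (H t))
    (hH0 : ∀ t ≤ T, H t 0 = 0)
    (hH1 : ∀ t ≤ T, deriv (H t) 0 = 0) :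
    (fun ε : ℝ =>
        (∑ t ∈ Finset.range (T + 1), (c t + C t * δx ε t + H t (δx ε t)))
        - (∑ t ∈ Finset.range (T + 1), c t)
        - (∑ t ∈ Finset.range (T + 1), C t * δxl ε t)
        - (∑ t ∈ Finset.range (T + 1),
            ((1 / 2) * iteratedDeriv 2 (H t) 0 * (δxl ε t) ^ 2 + C t * e2 ε t)))
      =O[nhds (0 : ℝ)] (fun ε : ℝ => ε ^ 3) := by
  have hxO := state_isBigO hS hS0 hS1 hx0 hx
  have hlO := linear_state_isBigO hl0 hl
  have hdO := state_sub_linear_isBigO_sq hS hS0 hS1 hx0 hx hl0 hl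
  have heO := state_sub_linear_sub_secondOrder_isBigO_cube hS hS0 hS1 hx0 hx hl0 hl he0 he
  have hstage : ∀ t ∈ Finset.range (T + 1), (fun ε => (c t + C t * δx ε t + H t (δx ε t))
      - c t - C t * δxl ε t - ((1 / 2) * iteratedDeriv 2 (H t) 0 * (δxl ε t) ^ 2 + C t * e2 ε t))
      =O[𝓝 0] fun ε => ε ^ 3 := by
    intro t ht
    have ht : t ≤ T := Nat.lt_succ_iff.mp (Finset.mem_range.mp ht)
    have hH2 := isBigO_comp_sub_half_mul_sq_of_sub (hH t ht) (hH0 t ht) (hH1 t ht) (hxO t ht)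
      (hlO t ht) (hdO t ht) ((hxO t ht).trans_tendsto tendsto_id)
    exact ((heO t ht).const_mul_left (C t)).add hH2 |>.congr_left fun ε => by ring
  refine (IsBigO.sum hstage).congr_left fun ε => ?_
  simp only [Finset.sum_apply, Finset.sum_sub_distrib]
end

section
/- If the noise values w_0,…,w_{T−1} are independent real random variables on a probability space, each with zero mean and almost surely bounded by a common constant, then the expected closed-loop cost satisfies E[J(ε)] = J̄ + O(ε²) as ε → 0; that is, ε ↦ E[J(ε)] − J̄ is O(ε²) in the neighborhood filter of 0. (Theorem 1, mean part: the expected cost under a smooth feedback policy is determined, up to second order in the noise scale ε, solely by the nominal (noise-free) cost.) -/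
/-!
Along the noise scale, the closed-loop deviation is uniformly of order `ε`: `δx_t = O(ε)` for
`ε → 0`, essentially surely in `ω`, since the noise is bounded. The nonlinear remainders `S̄_t`
and `H̄_t` vanish to second order, so they are `O(ε²)` uniformly in `ω`. Taking expectations, the
noise term drops out because it has mean zero, so `E[δx_{t+1}] = Ā_t E[δx_t] + O(ε²)` and by
induction `E[δx_t] = O(ε²)`; the cost is affine in `δx_t` up to such a remainder.

Uniformity in `ω` is expressed as a big-O along the product filter `𝓝 0 ×ˢ ae μ`.
-/

open Asymptotics Filter MeasureTheory Topology

theorem isBigO_sq_of_deriv_eq_zero {f : ℝ → ℝ} (hf : ContDiff ℝ 2 f) (h0 : f 0 = 0)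
    (h1 : deriv f 0 = 0) : f =O[𝓝 0] fun x => x ^ 2 := by
  have htaylor : taylorWithinEval f 2 Set.univ 0 = fun x => iteratedDeriv 2 f 0 / 2 * x ^ 2 := by
    funext x
    simp only [taylorWithinEval_succ, taylor_within_zero_eval, h0, CharP.cast_eq_zero, zero_add,
      Nat.factorial_zero, Nat.cast_one, mul_one, inv_one, sub_zero, pow_one, one_mul,
      iteratedDerivWithin_univ, iteratedDeriv_one, h1, smul_eq_mul, mul_zero, add_zero,
      Nat.factorial_one, Nat.reduceAdd]
    ring
  have hrem := taylor_isLittleO_univ (x₀ := 0) hf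
  simp only [htaylor, sub_zero] at hrem
  calc f = fun x => (f x - iteratedDeriv 2 f 0 / 2 * x ^ 2) + iteratedDeriv 2 f 0 / 2 * x ^ 2 := by
        simp
    _ =O[𝓝 0] fun x => x ^ 2 := hrem.isBigO.add ((isBigO_refl _ _).const_mul_left _)

theorem Asymptotics.IsBigO.comp_sq {β : Type*} {l : Filter β} {φ : ℝ → ℝ} {X g : β → ℝ}
    (hX : X =O[l] g) (hφ : φ =O[𝓝 0] fun x => x ^ 2) (hg : Tendsto g l (𝓝 0)) :
    (fun b => φ (X b)) =O[l] fun b => g b ^ 2 :=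
  (hφ.comp_tendsto (hX.trans_tendsto hg)).trans (hX.pow 2)

section UniformInOmega

variable {α Ω E F : Type*} [MeasurableSpace Ω] {μ : Measure Ω} [NormedAddCommGroup E] [Norm F]
  {l : Filter α}

theorem Asymptotics.IsBigO.exists_eventually_ae_norm_le {f : α → Ω → E} {g : α → F}
    (h : (fun p : α × Ω => f p.1 p.2) =O[l ×ˢ ae μ] fun p => g p.1) :
    ∃ c, ∀ᶠ a in l, ∀ᵐ ω ∂μ, ‖f a ω‖ ≤ c * ‖g a‖ := by
  obtain ⟨c, hc⟩ := h.bound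
  exact ⟨c, hc.curry⟩

theorem isBigO_integral_of_isBigO_prod_ae [NormedSpace ℝ E] [IsFiniteMeasure μ]
    {f : α → Ω → E} {g : α → F}
    (h : (fun p : α × Ω => f p.1 p.2) =O[l ×ˢ ae μ] fun p => g p.1) :
    (fun a => ∫ ω, f a ω ∂μ) =O[l] g := by
  obtain ⟨c, hc⟩ := h.exists_eventually_ae_norm_le
  refine IsBigO.of_bound (c * μ.real Set.univ) ?_
  filter_upwards [hc] with a ha
  calc ‖∫ ω, f a ω ∂μ‖ ≤ c * ‖g a‖ * μ.real Set.univ := norm_integral_le_of_norm_le_const ha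
    _ = c * μ.real Set.univ * ‖g a‖ := by ring

theorem eventually_integrable_of_isBigO_prod_ae [IsFiniteMeasure μ] {f : α → Ω → E}
    {g : α → F} (hf : ∀ a, AEStronglyMeasurable (f a) μ)
    (h : (fun p : α × Ω => f p.1 p.2) =O[l ×ˢ ae μ] fun p => g p.1) :
    ∀ᶠ a in l, Integrable (f a) μ := by
  obtain ⟨c, hc⟩ := h.exists_eventually_ae_norm_le
  filter_upwards [hc] with a ha using .of_bound (hf a) _ ha

theorem isBigO_one_prod_ae_of_ae_abs_le {w : Ω → ℝ} {C : ℝ} (hw : ∀ᵐ ω ∂μ, |w ω| ≤ C) :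
    (fun p : α × Ω => w p.2) =O[l ×ˢ ae μ] fun _ => (1 : ℝ) :=
  IsBigO.of_bound C <| by filter_upwards [hw.prod_inr l] with p hp using by simpa using hp

end UniformInOmega

structure IsClosedLoop {Ω : Type*} (T : ℕ) (A : ℕ → ℝ) (S : ℕ → ℝ → ℝ) (w : ℕ → Ω → ℝ)
    (δx : ℝ → ℕ → Ω → ℝ) : Prop where
  zero : ∀ ε ω, δx ε 0 ω = 0
  succ : ∀ ε, ∀ t < T, ∀ ω, δx ε (t + 1) ω = A t * δx ε t ω + S t (δx ε t ω) + ε * w t ω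

namespace IsClosedLoop

variable {Ω : Type*} [MeasurableSpace Ω] {μ : Measure Ω} {T : ℕ} {A : ℕ → ℝ} {S : ℕ → ℝ → ℝ}
  {w : ℕ → Ω → ℝ} {δx : ℝ → ℕ → Ω → ℝ}

theorem measurable (hδx : IsClosedLoop T A S w δx) (hS : ∀ t < T, Continuous (S t))
    (hw : ∀ t < T, Measurable (w t)) (ε : ℝ) : ∀ t ≤ T, Measurable (δx ε t) := by
  intro t
  induction t with
  | zero =>
    intro _
    rw [funext (hδx.zero ε)]
    exact measurable_const
  | succ t ih =>
    intro ht
    have hm := ih (Nat.le_of_succ_le ht)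
    rw [funext (hδx.succ ε t ht)]
    exact ((hm.const_mul _).add ((hS t ht).measurable.comp hm)).add ((hw t ht).const_mul _)

theorem isBigO (hδx : IsClosedLoop T A S w δx) (hS : ∀ t < T, S t =O[𝓝 0] fun y => y ^ 2)
    (C : ℝ) (hw : ∀ t < T, ∀ᵐ ω ∂μ, |w t ω| ≤ C) :
    ∀ t ≤ T, (fun p : ℝ × Ω => δx p.1 t p.2) =O[𝓝 0 ×ˢ ae μ] Prod.fst := by
  have hfst : Tendsto (Prod.fst : ℝ × Ω → ℝ) (𝓝 0 ×ˢ ae μ) (𝓝 0) := tendsto_fst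
  intro t
  induction t with
  | zero =>
    intro _
    simp only [hδx.zero]
    exact isBigO_zero _ _
  | succ t ih =>
    intro ht
    have hX := ih (Nat.le_of_succ_le ht)
    have hSX : (fun p : ℝ × Ω => S t (δx p.1 t p.2)) =O[𝓝 0 ×ˢ ae μ] Prod.fst :=
      (hX.comp_sq (hS t ht) hfst).trans ((isLittleO_pow_id one_lt_two).isBigO.comp_tendsto hfst)
    have hnoise : (fun p : ℝ × Ω => p.1 * w t p.2) =O[𝓝 0 ×ˢ ae μ] Prod.fst := by
      simpa using (isBigO_refl Prod.fst _).mul (isBigO_one_prod_ae_of_ae_abs_le (hw t ht))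
    simp only [hδx.succ _ t ht]
    exact ((hX.const_mul_left (A t)).add hSX).add hnoise

theorem isBigO_comp_sq (hδx : IsClosedLoop T A S w δx)
    (hS : ∀ t < T, S t =O[𝓝 0] fun y => y ^ 2) (C : ℝ) (hw : ∀ t < T, ∀ᵐ ω ∂μ, |w t ω| ≤ C)
    {φ : ℝ → ℝ} (hφ : φ =O[𝓝 0] fun y => y ^ 2) {t : ℕ} (ht : t ≤ T) :
    (fun p : ℝ × Ω => φ (δx p.1 t p.2)) =O[𝓝 0 ×ˢ ae μ] fun p => p.1 ^ 2 :=
  (hδx.isBigO hS C hw t ht).comp_sq hφ tendsto_fst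

theorem eventually_integrable_comp [IsFiniteMeasure μ] (hδx : IsClosedLoop T A S w δx)
    (hS : ∀ t < T, Continuous (S t)) (hSq : ∀ t < T, S t =O[𝓝 0] fun y => y ^ 2)
    (hwm : ∀ t < T, Measurable (w t)) (C : ℝ) (hw : ∀ t < T, ∀ᵐ ω ∂μ, |w t ω| ≤ C)
    {φ : ℝ → ℝ} (hφ : Continuous φ) (hφO : φ =O[𝓝 0] fun y => y) {t : ℕ} (ht : t ≤ T) :
    ∀ᶠ ε in 𝓝 0, Integrable (fun ω => φ (δx ε t ω)) μ := by
  have hX := hδx.isBigO hSq C hw t ht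
  refine eventually_integrable_of_isBigO_prod_ae (g := id)
    (fun ε => (hφ.measurable.comp (hδx.measurable hS hwm ε t ht)).aestronglyMeasurable) ?_
  exact (hφO.comp_tendsto (hX.trans_tendsto tendsto_fst)).trans hX

theorem isBigO_integral [IsProbabilityMeasure μ] (hδx : IsClosedLoop T A S w δx)
    (hS : ∀ t < T, Continuous (S t)) (hSq : ∀ t < T, S t =O[𝓝 0] fun y => y ^ 2)
    (hwm : ∀ t < T, Measurable (w t)) (C : ℝ) (hw : ∀ t < T, ∀ᵐ ω ∂μ, |w t ω| ≤ C)
    (hmean : ∀ t < T, ∫ ω, w t ω ∂μ = 0) :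
    ∀ t ≤ T, (fun ε => ∫ ω, δx ε t ω ∂μ) =O[𝓝 0] fun ε => ε ^ 2 := by
  intro t
  induction t with
  | zero =>
    intro _
    simp only [hδx.zero, integral_zero]
    exact isBigO_zero _ _
  | succ t ih =>
    intro ht
    have ht' : t ≤ T := Nat.le_of_succ_le ht
    have hwi : Integrable (w t) μ :=
      .of_bound (hwm t ht).aestronglyMeasurable C (by simpa using hw t ht)
    have hrec : (fun ε => ∫ ω, δx ε (t + 1) ω ∂μ) =ᶠ[𝓝 0]
        fun ε => A t * ∫ ω, δx ε t ω ∂μ + ∫ ω, S t (δx ε t ω) ∂μ := by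
      filter_upwards [hδx.eventually_integrable_comp hS hSq hwm C hw continuous_id'
          (isBigO_refl _ _) ht',
        hδx.eventually_integrable_comp hS hSq hwm C hw (hS t ht)
          ((hSq t ht).trans (isLittleO_pow_id one_lt_two).isBigO) ht'] with ε hXi hSi
      simp only [hδx.succ ε t ht]
      rw [integral_add ((hXi.const_mul _).fun_add hSi) (hwi.const_mul _),
        integral_add (hXi.const_mul _) hSi, integral_const_mul, integral_const_mul, hmean t ht,
        mul_zero, add_zero]
    exact hrec.trans_isBigO (((ih ht').const_mul_left _).add
      (isBigO_integral_of_isBigO_prod_ae (g := fun ε => ε ^ 2)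
        (hδx.isBigO_comp_sq hSq C hw (hSq t ht) ht')))

end IsClosedLoop

theorem integral_sum_affine_add_sub_sum {Ω ι : Type*} [MeasurableSpace Ω] {μ : Measure Ω}
    [IsProbabilityMeasure μ] (s : Finset ι) (c C : ι → ℝ) {X Y : ι → Ω → ℝ}
    (hX : ∀ t ∈ s, Integrable (X t) μ) (hY : ∀ t ∈ s, Integrable (Y t) μ) :
    ∫ ω, (∑ t ∈ s, (c t + C t * X t ω + Y t ω)) ∂μ - ∑ t ∈ s, c t =
      ∑ t ∈ s, (C t * ∫ ω, X t ω ∂μ + ∫ ω, Y t ω ∂μ) := by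
  have hcX t (ht : t ∈ s) : Integrable (fun ω => c t + C t * X t ω) μ :=
    (integrable_const _).fun_add ((hX t ht).const_mul _)
  rw [integral_finsetSum s (f := fun t ω => c t + C t * X t ω + Y t ω) fun t ht =>
    (hcX t ht).fun_add (hY t ht), ← Finset.sum_sub_distrib]
  refine Finset.sum_congr rfl fun t ht => ?_
  rw [integral_add (hcX t ht) (hY t ht),
    integral_add (integrable_const _) ((hX t ht).const_mul _), integral_const, integral_const_mul]
  simp only [probReal_univ, one_smul]
  ring

theorem expected_cost_eq_nominal_add_isBigO_sq_general
    {Ω : Type*} [MeasurableSpace Ω] (μ : Measure Ω) [IsProbabilityMeasure μ]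
    (T : ℕ) (A : ℕ → ℝ) (S : ℕ → ℝ → ℝ)
    (hS : ∀ t < T, ContDiff ℝ 3 (S t))
    (hS0 : ∀ t < T, S t 0 = 0)
    (hS1 : ∀ t < T, deriv (S t) 0 = 0)
    (w : ℕ → Ω → ℝ) (hmeas : ∀ t < T, Measurable (w t))
    (hmean : ∀ t < T, ∫ ω, w t ω ∂μ = 0)
    (Cbd : ℝ) (hbd : ∀ t < T, ∀ᵐ ω ∂μ, |w t ω| ≤ Cbd)
    (δx : ℝ → ℕ → Ω → ℝ)
    (hx0 : ∀ ε ω, δx ε 0 ω = 0)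
    (hx : ∀ ε, ∀ t < T, ∀ ω, δx ε (t + 1) ω = A t * δx ε t ω + S t (δx ε t ω) + ε * w t ω)
    (c C : ℕ → ℝ) (H : ℕ → ℝ → ℝ)
    (hH : ∀ t ≤ T, ContDiff ℝ 3 (H t))
    (hH0 : ∀ t ≤ T, H t 0 = 0)
    (hH1 : ∀ t ≤ T, deriv (H t) 0 = 0) :
    (fun ε : ℝ =>
        (∫ ω, (∑ t ∈ Finset.range (T + 1), (c t + C t * δx ε t ω + H t (δx ε t ω))) ∂μ)
        - ∑ t ∈ Finset.range (T + 1), c t)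
      =O[nhds (0 : ℝ)] (fun ε : ℝ => ε ^ 2) := by
  have hδx : IsClosedLoop T A S w δx := ⟨hx0, hx⟩
  have hSq t ht : S t =O[𝓝 0] fun y => y ^ 2 :=
    isBigO_sq_of_deriv_eq_zero ((hS t ht).of_le (by norm_num)) (hS0 t ht) (hS1 t ht)
  have hHq t ht : H t =O[𝓝 0] fun y => y ^ 2 :=
    isBigO_sq_of_deriv_eq_zero ((hH t ht).of_le (by norm_num)) (hH0 t ht) (hH1 t ht)
  have hScont t ht : Continuous (S t) := (hS t ht).continuous
  have hint : ∀ᶠ ε in 𝓝 0, ∀ t ∈ Finset.range (T + 1),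
      Integrable (δx ε t) μ ∧ Integrable (fun ω => H t (δx ε t ω)) μ := by
    refine (Finset.eventually_all _).2 fun t ht => ?_
    have ht : t ≤ T := Finset.mem_range_succ_iff.mp ht
    exact (hδx.eventually_integrable_comp hScont hSq hmeas Cbd hbd continuous_id'
      (isBigO_refl _ _) ht).and (hδx.eventually_integrable_comp hScont hSq hmeas Cbd hbd
        (hH t ht).continuous ((hHq t ht).trans (isLittleO_pow_id one_lt_two).isBigO) ht)
  refine EventuallyEq.trans_isBigO (hint.mono fun ε hε => integral_sum_affine_add_sub_sum _ c C
    (fun t ht => (hε t ht).1) (fun t ht => (hε t ht).2)) (IsBigO.fun_sum fun t ht => ?_)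
  have ht : t ≤ T := Finset.mem_range_succ_iff.mp ht
  exact ((hδx.isBigO_integral hScont hSq hmeas Cbd hbd hmean t ht).const_mul_left _).add
    (isBigO_integral_of_isBigO_prod_ae (g := fun ε => ε ^ 2)
      (hδx.isBigO_comp_sq hSq Cbd hbd (hHq t ht) ht))

/-- Theorem 1, mean part: for independent, zero-mean, a.s. uniformly bounded noises, the
expected closed-loop cost satisfies `E[J(ε)] = J̄ + O(ε²)` as `ε → 0`; the expected cost is
determined up to second order in `ε` solely by the nominal (noise-free) cost. -/
theorem expected_cost_eq_nominal_add_isBigO_sq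
    {Ω : Type*} [MeasurableSpace Ω] (μ : Measure Ω) [IsProbabilityMeasure μ]
    (T : ℕ) (A : ℕ → ℝ) (S : ℕ → ℝ → ℝ)
    (hS : ∀ t < T, ContDiff ℝ 3 (S t))
    (hS0 : ∀ t < T, S t 0 = 0)
    (hS1 : ∀ t < T, deriv (S t) 0 = 0)
    (w : ℕ → Ω → ℝ) (hmeas : ∀ t < T, Measurable (w t))
    (hindep : ProbabilityTheory.iIndepFun (fun t : Fin T => w t) μ)
    (hmean : ∀ t < T, ∫ ω, w t ω ∂μ = 0)
    (Cbd : ℝ) (hbd : ∀ t < T, ∀ᵐ ω ∂μ, |w t ω| ≤ Cbd)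
    (δx : ℝ → ℕ → Ω → ℝ)
    (hx0 : ∀ ε ω, δx ε 0 ω = 0)
    (hx : ∀ ε, ∀ t < T, ∀ ω, δx ε (t + 1) ω = A t * δx ε t ω + S t (δx ε t ω) + ε * w t ω)
    (c C : ℕ → ℝ) (H : ℕ → ℝ → ℝ)
    (hH : ∀ t ≤ T, ContDiff ℝ 3 (H t))
    (hH0 : ∀ t ≤ T, H t 0 = 0)
    (hH1 : ∀ t ≤ T, deriv (H t) 0 = 0) :
    (fun ε : ℝ =>
        (∫ ω, (∑ t ∈ Finset.range (T + 1), (c t + C t * δx ε t ω + H t (δx ε t ω))) ∂μ)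
        - ∑ t ∈ Finset.range (T + 1), c t)
      =O[nhds (0 : ℝ)] (fun ε : ℝ => ε ^ 2) :=
  expected_cost_eq_nominal_add_isBigO_sq_general μ T A S hS hS0 hS1 w hmeas hmean Cbd hbd δx hx0 hx
    c C H hH hH0 hH1
end
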